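/- For each positive integer k, let α_k be the unique negative real number satisfying (1+α_k)^4 + (k−1)α_k^4 = 2. Then as k → ∞, α_k = −k^{−1/4} − k^{−1/2} + 2k^{−3/4} + O(k^{−1}). -/
import Mathlib

set_option maxHeartbeats 1000000

/-- Convexity-type estimate: value at `l*u` is bounded by interpolation of the
values at `u` and `0` for the function `x ↦ (1+x)^4 + c*x^4`. -/
lemma stmt16_convex_aux (c u l : ℝ) (hc : 0 ≤ c) (h0 : 0 ≤ l) (h1 : l ≤ 1) :
    (1 + l*u)^4 + c*(l*u)^4 ≤ l*((1+u)^4 + c*u^4) + (1-l) := by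
  have hconv := (Even.convexOn_pow (n := 4) (by decide)).2
    (Set.mem_univ (1+u)) (Set.mem_univ (1:ℝ)) h0
    (show (0:ℝ) ≤ 1 - l by linarith) (show l + (1-l) = 1 by ring)
  simp only [smul_eq_mul] at hconv
  have h14 : l * (1 + u) + (1 - l) * 1 = 1 + l*u := by ring
  rw [h14, one_pow] at hconv
  have hl4 : l^4 ≤ l := by
    calc l^4 ≤ l^1 := pow_le_pow_of_le_one h0 h1 (by norm_num)
    _ = l := pow_one l
  have hu4 : (0:ℝ) ≤ u^4 := by positivity
  have h2 : c*(l*u)^4 ≤ c*(l*u^4) := by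
    have hrw : (l*u)^4 = l^4 * u^4 := by ring
    rw [hrw]
    exact mul_le_mul_of_nonneg_left (mul_le_mul_of_nonneg_right hl4 hu4) hc
  have hrw2 : l*((1+u)^4 + c*u^4) + (1-l) = (l*(1+u)^4 + (1-l)*1) + c*(l*u^4) := by ring
  rw [hrw2]
  exact add_le_add hconv h2

lemma stmt16_signA (t K : ℝ) (ht : 0 < t) (ht1 : t ≤ 1/100) (hkt : K * t^4 = 1) :
    2 < (1 + (-t - t^2 + 2*t^3 - 2*t^4))^4 + (K-1)*(-t - t^2 + 2*t^3 - 2*t^4)^4 := by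
  have p1 : (0:ℝ) ≤ t := ht.le
  have p2 : t^2 ≤ t := by nlinarith
  have p3 : t^3 ≤ t^2 := by nlinarith
  have p4 : t^4 ≤ t^3 := by nlinarith
  have p5 : t^5 ≤ t^4 := by nlinarith
  have p6 : t^6 ≤ t^5 := by nlinarith
  have p7 : t^7 ≤ t^6 := by nlinarith
  have p8 : t^8 ≤ t^7 := by nlinarith
  have p9 : t^9 ≤ t^8 := by nlinarith
  have n2 : (0:ℝ) ≤ t^2 := by positivity
  have n5 : (0:ℝ) ≤ t^5 := by positivity
  have n8 : (0:ℝ) ≤ t^8 := by positivity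
  have n9 : (0:ℝ) ≤ t^9 := by positivity
  have hR : 0 < 4 - 13*t + 28*t^2 - 4*t^3 - 56*t^4 + 88*t^5 - 48*t^6 - 16*t^7 + 32*t^8 - 16*t^9 := by
    linarith
  have key : (1 + (-t - t^2 + 2*t^3 - 2*t^4))^4 + (K-1)*(-t - t^2 + 2*t^3 - 2*t^4)^4 - 2
      = t^3 * (4 - 13*t + 28*t^2 - 4*t^3 - 56*t^4 + 88*t^5 - 48*t^6 - 16*t^7 + 32*t^8 - 16*t^9) := by
    linear_combination ((-1 - t + 2*t^2 - 2*t^3)^4) * hkt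
  have hpos : 0 < t^3 * (4 - 13*t + 28*t^2 - 4*t^3 - 56*t^4 + 88*t^5 - 48*t^6 - 16*t^7 + 32*t^8 - 16*t^9) :=
    mul_pos (by positivity) hR
  linarith [key ▸ hpos]

lemma stmt16_signB (t K : ℝ) (ht : 0 < t) (ht1 : t ≤ 1/100) (hkt : K * t^4 = 1) :
    (1 + (-t - t^2 + 2*t^3 + 2*t^4))^4 + (K-1)*(-t - t^2 + 2*t^3 + 2*t^4)^4 < 2 := by
  have p1 : (0:ℝ) ≤ t := ht.le
  have p2 : t^2 ≤ t := by nlinarith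
  have p3 : t^3 ≤ t^2 := by nlinarith
  have p4 : t^4 ≤ t^3 := by nlinarith
  have p5 : t^5 ≤ t^4 := by nlinarith
  have p6 : t^6 ≤ t^5 := by nlinarith
  have p7 : t^7 ≤ t^6 := by nlinarith
  have p8 : t^8 ≤ t^7 := by nlinarith
  have p9 : t^9 ≤ t^8 := by nlinarith
  have n3 : (0:ℝ) ≤ t^3 := by positivity
  have n4 : (0:ℝ) ≤ t^4 := by positivity
  have n7 : (0:ℝ) ≤ t^7 := by positivity
  have n8 : (0:ℝ) ≤ t^8 := by positivity
  have n9 : (0:ℝ) ≤ t^9 := by positivity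
  have hR : -12 - 45*t + 28*t^2 + 172*t^3 + 40*t^4 - 248*t^5 - 176*t^6 + 112*t^7 + 160*t^8 + 48*t^9 < 0 := by
    linarith
  have key : (1 + (-t - t^2 + 2*t^3 + 2*t^4))^4 + (K-1)*(-t - t^2 + 2*t^3 + 2*t^4)^4 - 2
      = t^3 * (-12 - 45*t + 28*t^2 + 172*t^3 + 40*t^4 - 248*t^5 - 176*t^6 + 112*t^7 + 160*t^8 + 48*t^9) := by
    linear_combination ((-1 - t + 2*t^2 + 2*t^3)^4) * hkt
  have hneg : t^3 * (-12 - 45*t + 28*t^2 + 172*t^3 + 40*t^4 - 248*t^5 - 176*t^6 + 112*t^7 + 160*t^8 + 48*t^9) < 0 :=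
    mul_neg_of_pos_of_neg (by positivity) hR
  linarith [key ▸ hneg]

/-- **Asymptotics of `α_k`.** If `α_k` denotes, for each positive integer `k`, the
unique negative real with `(1+α_k)⁴ + (k-1)α_k⁴ = 2`, then as `k → ∞`,
`α_k = -k^{-1/4} - k^{-1/2} + 2k^{-3/4} + O(k⁻¹)`. -/
theorem stmt16 : ∃ C : ℝ, ∃ N : ℕ, ∀ k : ℕ, N ≤ k → ∀ α : ℝ, α < 0 →
    (1 + α) ^ 4 + ((k : ℝ) - 1) * α ^ 4 = 2 →
    |α - (-(k : ℝ) ^ (-(1 : ℝ) / 4) - (k : ℝ) ^ (-(1 : ℝ) / 2) +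
        2 * (k : ℝ) ^ (-(3 : ℝ) / 4))| ≤ C * (k : ℝ)⁻¹ := by
  refine ⟨2, 10^8, fun k hk α hα heq => ?_⟩
  have hkpos : (0:ℝ) < (k:ℝ) := by
    have : 0 < k := by omega
    exact_mod_cast this
  obtain ⟨t, htdef⟩ : ∃ t : ℝ, t = (k:ℝ) ^ (-(1:ℝ)/4) := ⟨_, rfl⟩
  have ht : 0 < t := htdef ▸ Real.rpow_pos_of_pos hkpos _
  have h2 : t^2 = (k:ℝ) ^ (-(1:ℝ)/2) := by
    rw [htdef, ← Real.rpow_natCast ((k:ℝ) ^ (-(1:ℝ)/4)) 2, ← Real.rpow_mul hkpos.le]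
    norm_num
  have h3 : t^3 = (k:ℝ) ^ (-(3:ℝ)/4) := by
    rw [htdef, ← Real.rpow_natCast ((k:ℝ) ^ (-(1:ℝ)/4)) 3, ← Real.rpow_mul hkpos.le]
    norm_num
  have h4 : t^4 = (k:ℝ)⁻¹ := by
    rw [htdef, ← Real.rpow_natCast ((k:ℝ) ^ (-(1:ℝ)/4)) 4, ← Real.rpow_mul hkpos.le]
    norm_num [Real.rpow_neg_one]
  have hkt : (k:ℝ) * t^4 = 1 := by rw [h4]; exact mul_inv_cancel₀ (ne_of_gt hkpos)
  have ht1 : t ≤ 1/100 := by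
    have hk8 : (10^8 : ℝ) ≤ (k:ℝ) := by exact_mod_cast hk
    have h44 : t^4 ≤ (1/100:ℝ)^4 := by
      rw [h4, show ((1:ℝ)/100)^4 = ((10:ℝ)^8)⁻¹ by norm_num]
      exact inv_anti₀ (by norm_num) hk8
    exact le_of_pow_le_pow_left₀ (by norm_num) (by norm_num) h44
  have hc : (0:ℝ) ≤ (k:ℝ) - 1 := by
    have h1k : (1:ℝ) ≤ (k:ℝ) := by
      have : 1 ≤ k := by omega
      exact_mod_cast this
    linarith
  have hfa := stmt16_signA t (k:ℝ) ht ht1 hkt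
  have hfb := stmt16_signB t (k:ℝ) ht ht1 hkt
  obtain ⟨a, hadef⟩ : ∃ a : ℝ, a = -t - t^2 + 2*t^3 - 2*t^4 := ⟨_, rfl⟩
  obtain ⟨b, hbdef⟩ : ∃ b : ℝ, b = -t - t^2 + 2*t^3 + 2*t^4 := ⟨_, rfl⟩
  rw [← hadef] at hfa
  rw [← hbdef] at hfb
  have hq3 : t^3 ≤ (1/100)*t^2 := by nlinarith
  have hq4 : t^4 ≤ (1/100)*t^3 := by nlinarith
  have nn2 : (0:ℝ) ≤ t^2 := by positivity
  have nn3 : (0:ℝ) ≤ t^3 := by positivity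
  have nn4 : (0:ℝ) ≤ t^4 := by positivity
  have ha0 : a < 0 := by rw [hadef]; linarith
  have hb0 : b < 0 := by rw [hbdef]; linarith
  -- α ≥ a
  have hαa : a ≤ α := by
    by_contra hcon
    push_neg at hcon   -- α < a
    have hl0 : 0 < a / α := div_pos_of_neg_of_neg ha0 hα
    have hl1 : a / α ≤ 1 := by
      have hne : α ≠ 0 := ne_of_lt hα
      have hd : a / α - 1 = (a - α) / α := by field_simp
      have hneg : (a - α) / α < 0 := div_neg_of_pos_of_neg (by linarith) hα
      linarith
    have hcvx := stmt16_convex_aux ((k:ℝ)-1) α (a/α) hc hl0.le hl1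
    have hla : (a/α) * α = a := div_mul_cancel₀ a (ne_of_lt hα)
    rw [hla] at hcvx
    rw [heq] at hcvx
    linarith
  -- α ≤ b
  have hαb : α ≤ b := by
    by_contra hcon
    push_neg at hcon   -- b < α
    have hl0 : 0 < α / b := div_pos_of_neg_of_neg hα hb0
    have hl1 : α / b ≤ 1 := by
      have hbne : b ≠ 0 := ne_of_lt hb0
      have hd : α / b - 1 = (α - b) / b := by field_simp
      have hneg : (α - b) / b < 0 := div_neg_of_pos_of_neg (by linarith) hb0
      linarith
    have hcvx := stmt16_convex_aux ((k:ℝ)-1) b (α/b) hc hl0.le hl1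
    have hlb : (α/b) * b = α := div_mul_cancel₀ α (ne_of_lt hb0)
    rw [hlb] at hcvx
    rw [heq] at hcvx
    nlinarith [hcvx, hfb, hl0, hl1]
  -- conclude
  have hβ : -(k:ℝ) ^ (-(1:ℝ)/4) - (k:ℝ) ^ (-(1:ℝ)/2) + 2 * (k:ℝ) ^ (-(3:ℝ)/4)
      = -t - t^2 + 2*t^3 := by rw [← h2, ← h3, htdef]
  rw [hβ, ← h4, abs_le]
  constructor
  · rw [hadef] at hαa; linarith
  · rw [hbdef] at hαb; linarith
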